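/- Under the same hypotheses, the second (elbow-up) solution θ₁ = φ + α − θ_base, θ₂ = −(π − β) also satisfies the same forward-kinematics equations; hence the planar 2R inverse kinematics admits two solutions whenever 0 < α < π. -/

import Mathlib

/-! The target lies at `r e^{iφ}` from joint 1, and `α`, `β` are two angles of the triangle with
sides `l₁`, `l₂`, `r`. Its projection formula `r cos α + l₂ cos β = l₁` and law of sines
`l₂ sin β = r sin α` say `l₁ - l₂ e^{iβ} = r e^{-iα}`; multiplying by `e^{i(φ+α)}` shows that the
elbow `l₁ e^{i(φ+α)}` followed by the forearm `-l₂ e^{i(φ+α+β)}` ends at `r e^{iφ}`. -/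

open Real

section Triangle

variable {a b c : ℝ}

theorem cos_arccos_cosine_rule (ha : 0 < a) (hb : 0 < b) (hc₁ : |a - b| ≤ c) (hc₂ : c ≤ a + b) :
    cos (arccos ((a ^ 2 + b ^ 2 - c ^ 2) / (2 * a * b))) = (a ^ 2 + b ^ 2 - c ^ 2) / (2 * a * b) := by
  obtain ⟨hlo, hhi⟩ := abs_le.mp hc₁
  have hab : 0 < 2 * a * b := by positivity
  apply cos_arccos
  · rw [le_div_iff₀ hab]; nlinarith
  · rw [div_le_one hab]; nlinarith

theorem two_mul_mul_sin_arccos_cosine_rule (ha : 0 < a) (hb : 0 < b) :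
    2 * a * b * sin (arccos ((a ^ 2 + b ^ 2 - c ^ 2) / (2 * a * b))) =
      √((2 * a * b) ^ 2 - (a ^ 2 + b ^ 2 - c ^ 2) ^ 2) := by
  have hab : 0 < 2 * a * b := by positivity
  rw [sin_arccos, ← sqrt_sq hab.le, ← sqrt_mul (sq_nonneg _), sqrt_sq hab.le]
  congr 1
  field_simp

end Triangle

section TwoLink

variable {l₁ l₂ r : ℝ}

theorem projection_formula_arccos (hl₁ : 0 < l₁) (hl₂ : 0 < l₂) (hr : 0 < r)
    (hrlo : |l₁ - l₂| ≤ r) (hrhi : r ≤ l₁ + l₂) :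
    r * cos (arccos ((r ^ 2 + l₁ ^ 2 - l₂ ^ 2) / (2 * r * l₁))) +
      l₂ * cos (arccos ((l₁ ^ 2 + l₂ ^ 2 - r ^ 2) / (2 * l₁ * l₂))) = l₁ := by
  obtain ⟨hlo, hhi⟩ := abs_le.mp hrlo
  rw [cos_arccos_cosine_rule hr hl₁ (abs_le.mpr ⟨by linarith, by linarith⟩) (by linarith),
    cos_arccos_cosine_rule hl₁ hl₂ hrlo hrhi]
  field_simp
  ring

theorem law_of_sines_arccos (hl₁ : 0 < l₁) (hl₂ : 0 < l₂) (hr : 0 < r) :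
    l₂ * sin (arccos ((l₁ ^ 2 + l₂ ^ 2 - r ^ 2) / (2 * l₁ * l₂))) =
      r * sin (arccos ((r ^ 2 + l₁ ^ 2 - l₂ ^ 2) / (2 * r * l₁))) := by
  have hα := two_mul_mul_sin_arccos_cosine_rule (c := l₂) hr hl₁
  have hβ := two_mul_mul_sin_arccos_cosine_rule (c := r) hl₁ hl₂
  have heron : (2 * r * l₁) ^ 2 - (r ^ 2 + l₁ ^ 2 - l₂ ^ 2) ^ 2 =
      (2 * l₁ * l₂) ^ 2 - (l₁ ^ 2 + l₂ ^ 2 - r ^ 2) ^ 2 := by ring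
  rw [heron, ← hβ] at hα
  exact mul_left_cancel₀ (by positivity : (2 * l₁ : ℝ) ≠ 0) (by linear_combination -hα)

theorem elbow_up_reaches {α β : ℝ} (h_cos : r * cos α + l₂ * cos β = l₁)
    (h_sin : l₂ * sin β = r * sin α) (φ : ℝ) :
    l₁ * cos (φ + α) + l₂ * cos (φ + α - (π - β)) = r * cos φ ∧
      l₁ * sin (φ + α) + l₂ * sin (φ + α - (π - β)) = r * sin φ := by
  have hpyth := sin_sq_add_cos_sq α
  rw [sub_sub_eq_add_sub, cos_sub_pi, sin_sub_pi, cos_add (φ + α), sin_add (φ + α), cos_add φ,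
    sin_add φ]
  constructor
  · linear_combination (sin φ * cos α + cos φ * sin α) * h_sin -
      (cos φ * cos α - sin φ * sin α) * h_cos + r * cos φ * hpyth
  · linear_combination -(cos φ * cos α - sin φ * sin α) * h_sin -
      (sin φ * cos α + cos φ * sin α) * h_cos + r * sin φ * hpyth

end TwoLink

/-- Inverse kinematics of the planar 2R arm (elbow-up branch): the joint angles
`θ₁ = φ - α - θ_base`, `θ₂ = π - β` satisfy the forward-kinematics equations. -/
theorem planar2R_IK_elbow_up
    (l₁ l₂ x₁ z₁ xe ze θbase r φ α β θ₁ θ₂ : ℝ)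
    (hl₁ : 0 < l₁) (hl₂ : 0 < l₂)
    (hr : r = Real.sqrt ((xe - x₁) ^ 2 + (ze - z₁) ^ 2))
    (hrpos : 0 < r) (hrlo : |l₁ - l₂| ≤ r) (hrhi : r ≤ l₁ + l₂)
    (hφ : φ = Complex.arg ⟨xe - x₁, ze - z₁⟩)
    (hα : α = Real.arccos ((r ^ 2 + l₁ ^ 2 - l₂ ^ 2) / (2 * r * l₁)))
    (hβ : β = Real.arccos ((l₁ ^ 2 + l₂ ^ 2 - r ^ 2) / (2 * l₁ * l₂)))
    (hθ₁ : θ₁ = φ + α - θbase) (hθ₂ : θ₂ = -(π - β)) :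
    xe = x₁ + l₁ * Real.cos (θbase + θ₁) + l₂ * Real.cos (θbase + θ₁ + θ₂) ∧
    ze = z₁ + l₁ * Real.sin (θbase + θ₁) + l₂ * Real.sin (θbase + θ₁ + θ₂) := by
  have hr_norm : r = ‖(⟨xe - x₁, ze - z₁⟩ : ℂ)‖ := by
    rw [hr, Complex.norm_def, Complex.normSq_mk]; ring_nf
  have hx : r * cos φ = xe - x₁ := by rw [hr_norm, hφ, Complex.norm_mul_cos_arg]
  have hz : r * sin φ = ze - z₁ := by rw [hr_norm, hφ, Complex.norm_mul_sin_arg]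
  obtain ⟨hx', hz'⟩ := elbow_up_reaches
    (hα ▸ hβ ▸ projection_formula_arccos hl₁ hl₂ hrpos hrlo hrhi)
    (hα ▸ hβ ▸ law_of_sines_arccos hl₁ hl₂ hrpos) φ
  have h₁ : θbase + θ₁ = φ + α := by rw [hθ₁]; ring
  have h₂ : φ + α + θ₂ = φ + α - (π - β) := by rw [hθ₂]; ring
  rw [h₁, h₂]
  constructor <;> linarith
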